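/- (Theorem 2, open-loop control) Let Y^(0), Y^(1), ..., Y^(K) be i.i.d. random trajectories, each a random element of (ℝ^d)^{T+1}, writing Y^(i) = (Y^(i)_0,...,Y^(i)_T). For each τ ∈ {1,...,T} let h_τ : ℝ^d → ℝ^d be a measurable predictor and set ŷ^(i)_{τ|0} := h_τ(Y^(i)_0). Let δ ∈ (0,1), δ̄ := δ/T, p := ⌈(K+1)(1−δ̄)⌉, and for each τ let C_{τ|0} be the p-th smallest element of the list (‖Y^(1)_τ − ŷ^(1)_{τ|0}‖, ..., ‖Y^(K)_τ − ŷ^(K)_{τ|0}‖, +∞). Let c : ℝ^n × ℝ^d → ℝ satisfy |c(x, y') − c(x, y'')| ≤ L‖y' − y''‖ for all x, y', y''. Suppose the open-loop plan consists of measurable maps ξ_τ : ℝ^d → ℝ^n, τ ∈ {1,...,T}, giving states x_τ := ξ_τ(Y^(0)_0), such that almost surely c(ξ_τ(Y^(0)_0), h_τ(Y^(0)_0)) ≥ L·C_{τ|0} for every τ ∈ {1,...,T} (in particular C_{τ|0} < ∞). Then P(c(x_τ, Y^(0)_τ) ≥ 0 for all τ ∈ {1,...,T}) ≥ 1 − δ.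 -/

import Mathlib

open MeasureTheory ProbabilityTheory
open scoped ENNReal

/-- The `p`-th smallest element (1-indexed) of the list consisting of the `K` extended-real
scores `R 1, ..., R K` together with `+∞`. -/
noncomputable def conformalBound (K : ℕ) (R : Fin K → EReal) (p : ℕ) : EReal :=
  (@List.insertionSort EReal (· ≤ ·) (Classical.decRel _)
    (((List.finRange K).map R) ++ [⊤])).getD (p - 1) ⊤


lemma sorted_rel_getElem {α : Type*} [LinearOrder α] {l : List α}
    (hs : l.Pairwise (· ≤ ·)) {i j : ℕ} (hi : i < l.length) (hj : j < l.length) (hij : i ≤ j) :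
    l[i] ≤ l[j] := by
  have := hs.rel_get_of_le (a := ⟨i, hi⟩) (b := ⟨j, hj⟩) hij
  simpa using this

-- For a ≤-sorted list, x ≤ l[i] iff at most i elements are < x.
lemma sorted_le_get_iff {α : Type*} [LinearOrder α] {l : List α}
    (hs : l.Pairwise (· ≤ ·)) {i : ℕ} (hi : i < l.length) (x : α) :
    x ≤ l[i] ↔ l.countP (fun y => decide (y < x)) ≤ i := by
  constructor
  · intro hx
    rw [← List.take_append_drop i l, List.countP_append]
    have h1 : (l.take i).countP (fun y => decide (y < x)) ≤ i := by
      calc (l.take i).countP _ ≤ (l.take i).length := List.countP_le_length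
      _ ≤ i := by rw [List.length_take]; omega
    have h2 : (l.drop i).countP (fun y => decide (y < x)) = 0 := by
      rw [List.countP_eq_zero]
      intro a ha
      obtain ⟨j, hj, rfl⟩ := List.mem_iff_getElem.1 ha
      have hj' : i + j < l.length := by rw [List.length_drop] at hj; omega
      have hget : (l.drop i)[j] = l[i + j] := by rw [List.getElem_drop]
      rw [hget]
      have hle : l[i] ≤ l[i+j] := sorted_rel_getElem hs hi hj' (by omega)
      simp only [decide_eq_true_eq]
      exact not_lt.2 (le_trans hx hle)
    omega
  · intro hcount
    by_contra hx
    push_neg at hx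
    have hkey : (l.take (i + 1)).countP (fun y => decide (y < x)) = (l.take (i+1)).length := by
      rw [List.countP_eq_length]
      intro a ha
      obtain ⟨j, hj, rfl⟩ := List.mem_iff_getElem.1 ha
      have hj1 : j < i + 1 := by rw [List.length_take] at hj; omega
      have hj' : j < l.length := by omega
      have hget : (l.take (i+1))[j] = l[j] := by rw [List.getElem_take]
      rw [hget]
      have hle : l[j] ≤ l[i] := sorted_rel_getElem hs hj' hi (by omega)
      simp only [decide_eq_true_eq]
      exact lt_of_le_of_lt hle hx
    have hlen : (l.take (i+1)).length = i + 1 := by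
      rw [List.length_take]; omega
    have hle : (l.take (i+1)).countP (fun y => decide (y < x)) ≤
        l.countP (fun y => decide (y < x)) :=
      List.Sublist.countP_le (List.take_sublist _ _)
    omega

lemma countP_finRange {K : ℕ} (P : Fin K → Prop) [DecidablePred P] :
    (List.finRange K).countP (fun j => decide (P j)) = (Finset.univ.filter P).card := by
  simp [Finset.filter, Finset.card, Fin.univ_def, List.countP_eq_length_filter]

lemma le_conformalBound_iff {K p : ℕ} (hp1 : 1 ≤ p) (hpK : p ≤ K + 1)
    (R : Fin K → ℝ) (x : ℝ) :
    ((x : EReal) ≤ conformalBound K (fun i => ((R i : ℝ) : EReal)) p ↔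
      (Finset.univ.filter fun j => R j < x).card < p) := by
  classical
  set l : List EReal := ((List.finRange K).map fun i => ((R i : ℝ) : EReal)) ++ [⊤] with hl
  set ls := @List.insertionSort EReal (· ≤ ·) (Classical.decRel _) l with hls
  have hperm : ls.Perm l := @List.perm_insertionSort EReal (· ≤ ·) (Classical.decRel _) l
  have hlen : ls.length = K + 1 := by
    rw [hperm.length_eq, hl]; simp
  have hplt : p - 1 < ls.length := by omega
  have hgetD : conformalBound K (fun i => ((R i : ℝ) : EReal)) p = ls[p-1] := by
    rw [conformalBound]
    exact List.getD_eq_getElem _ _ hplt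
  have hsorted : ls.Pairwise (· ≤ ·) :=
    @List.pairwise_insertionSort EReal (· ≤ ·) (Classical.decRel _) _ _ l
  have hsorted : ls.Pairwise (· ≤ ·) :=
    @List.pairwise_insertionSort EReal (· ≤ ·) (Classical.decRel _) _ _ l
  rw [hgetD, sorted_le_get_iff hsorted hplt]
  have hcount : ls.countP (fun y => decide (y < (x : EReal))) =
      (Finset.univ.filter fun j => R j < x).card := by
    rw [hperm.countP_eq, hl, List.countP_append, List.countP_map]
    have h2 : List.countP (fun y => decide (y < (x : EReal))) ([⊤]) = 0 := by
      simp [not_top_lt]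
    rw [h2, Nat.add_zero]
    have : ∀ j : Fin K, (((R j : ℝ) : EReal) < (x : EReal)) = (R j < x) := by
      intro j; simp [EReal.coe_lt_coe_iff]
    calc List.countP ((fun y => decide (y < (x:EReal))) ∘ fun i => ((R i : ℝ) : EReal)) (List.finRange K)
        = List.countP (fun j => decide (R j < x)) (List.finRange K) := by
          apply List.countP_congr; intro a _; simp [Function.comp, EReal.coe_lt_coe_iff]
      _ = (Finset.univ.filter fun j => R j < x).card := countP_finRange _
  rw [hcount]
  omega

lemma count_rank {K : ℕ} (v : Fin K → ℝ) (p : ℕ) (hp : p ≤ K) :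
    (Finset.univ.filter fun i => p ≤ (Finset.univ.filter fun j => v j < v i).card).card
      ≤ K - p := by
  classical
  set B := Finset.univ.filter fun i => p ≤ (Finset.univ.filter fun j => v j < v i).card with hB
  set σ := Tuple.sort v with hσ
  have hmono : Monotone (v ∘ σ) := Tuple.monotone_sort v
  -- each of σ k for k < p avoids B
  have key : ∀ k : Fin K, (k : ℕ) < p → σ k ∉ B := by
    intro k hk hmem
    rw [hB, Finset.mem_filter] at hmem
    have hcard : (Finset.univ.filter fun j => v j < v (σ k)).card ≤
        (Finset.univ.filter fun j : Fin K => j < k).card := by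
      apply Finset.card_le_card_of_injOn σ.symm
      · intro j hj
        simp only [Finset.mem_coe, Finset.mem_filter, Finset.mem_univ, true_and] at hj ⊢
        by_contra hcon
        push_neg at hcon
        have := hmono hcon
        simp only [Function.comp_apply, Equiv.apply_symm_apply] at this
        exact absurd hj (not_lt.2 this)
      · intro a _ b _ hab
        exact σ.symm.injective hab
    have : (Finset.univ.filter fun j : Fin K => j < k).card = (k : ℕ) := by
      have : (Finset.univ.filter fun j : Fin K => j < k) = Finset.Iio k := by
        ext j; simp
      rw [this, Fin.card_Iio]
    omega
  have hsub : ∀ m : Fin p, σ (Fin.castLE hp m) ∈ Finset.univ \ B := by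
    intro m
    simp only [Finset.mem_sdiff, Finset.mem_univ, true_and]
    exact key _ (by simpa using m.isLt)
  have hinj : ∀ a ∈ (Finset.univ : Finset (Fin p)), ∀ b ∈ (Finset.univ : Finset (Fin p)),
      σ (Fin.castLE hp a) = σ (Fin.castLE hp b) → a = b := by
    intro a _ b _ hab
    have := σ.injective hab
    exact Fin.castLE_injective hp this
  have hle : (Finset.univ : Finset (Fin p)).card ≤ (Finset.univ \ B).card :=
    Finset.card_le_card_of_injOn _ (fun a _ => hsub a) hinj
  have h1 : (Finset.univ : Finset (Fin p)).card = p := by simp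
  have h2 : (Finset.univ \ B).card = K - B.card := by
    rw [Finset.card_sdiff_of_subset (Finset.subset_univ B)]; simp
  have h3 : B.card ≤ K := by
    calc B.card ≤ (Finset.univ : Finset (Fin K)).card := Finset.card_le_card (Finset.subset_univ B)
    _ = K := by simp
  omega

lemma map_tuple_eq_pi {Ω : Type*} [MeasurableSpace Ω] {ι : Type*} [Fintype ι]
    {β : Type*} [MeasurableSpace β]
    (μ : Measure Ω) [IsProbabilityMeasure μ] (Y : ι → Ω → β) (hY : ∀ i, Measurable (Y i))
    (hindep : iIndepFun Y μ) :
    Measure.map (fun ω i => Y i ω) μ = Measure.pi (fun i => μ.map (Y i)) := by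
  haveI : ∀ i, IsProbabilityMeasure (μ.map (Y i)) :=
    fun i => Measure.isProbabilityMeasure_map (hY i).aemeasurable
  refine (Measure.pi_eq fun s hs => ?_).symm
  rw [Measure.map_apply (measurable_pi_lambda _ hY) (MeasurableSet.univ_pi hs)]
  have hpre : (fun ω i => Y i ω) ⁻¹' Set.pi Set.univ s = ⋂ i ∈ Finset.univ, Y i ⁻¹' s i := by
    ext ω; simp [Set.mem_pi]
  rw [hpre, hindep.measure_inter_preimage_eq_mul Finset.univ (fun i _ => hs i)]
  exact Finset.prod_congr rfl fun i _ => (Measure.map_apply (hY i) (hs i)).symm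

lemma rank_bound {Ω : Type*} [MeasurableSpace Ω] {β : Type*} [MeasurableSpace β]
    (μ : Measure Ω) [IsProbabilityMeasure μ] {K : ℕ}
    (Y : Fin (K+1) → Ω → β) (hY : ∀ i, Measurable (Y i))
    (hindep : iIndepFun Y μ)
    (hident : ∀ i, μ.map (Y i) = μ.map (Y 0))
    (g : β → ℝ) (hg : Measurable g) (p : ℕ) (hpK : p ≤ K + 1) :
    ((K : ℝ≥0∞) + 1) *
      μ {ω | p ≤ (Finset.univ.filter fun j : Fin (K+1) => g (Y j ω) < g (Y 0 ω)).card}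
      ≤ ((K + 1 - p : ℕ) : ℝ≥0∞) := by
  set ν := μ.map (Y 0) with hν
  haveI : IsProbabilityMeasure ν := Measure.isProbabilityMeasure_map (hY 0).aemeasurable
  -- the count functions on the product space
  set N : Fin (K+1) → (Fin (K+1) → β) → ℕ :=
    fun i v => (Finset.univ.filter fun j => g (v j) < g (v i)).card with hN
  have hNmeas : ∀ i, Measurable (N i) := by
    intro i
    have hNi : N i = fun v => ∑ j : Fin (K+1), if g (v j) < g (v i) then 1 else 0 := by
      funext v; exact Finset.card_filter _ _
    rw [hNi]
    refine Finset.measurable_sum _ fun j _ => Measurable.ite ?_ measurable_const measurable_const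
    exact measurableSet_lt ((hg.comp (measurable_pi_apply j)))
      ((hg.comp (measurable_pi_apply i)))
  set A : Fin (K+1) → Set (Fin (K+1) → β) := fun i => {v | p ≤ N i v} with hA
  have hAmeas : ∀ i, MeasurableSet (A i) := by
    intro i
    exact (hNmeas i) measurableSet_Ici
  set Z : Ω → (Fin (K+1) → β) := fun ω i => Y i ω with hZ
  have hZmeas : Measurable Z := measurable_pi_lambda _ hY
  have hmap : Measure.map Z μ = Measure.pi (fun _ => ν) := by
    rw [hZ, map_tuple_eq_pi μ Y hY hindep]
    congr 1
    funext i
    exact hident i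
  -- swap invariance
  have hswap : ∀ i : Fin (K+1), Measure.pi (fun _ : Fin (K+1) => ν) (A i)
      = Measure.pi (fun _ : Fin (K+1) => ν) (A 0) := by
    intro i
    set e := Equiv.swap (0 : Fin (K+1)) i with he
    have hAe : A i = (fun v => v ∘ e) ⁻¹' A 0 := by
      ext v
      simp only [hA, Set.mem_setOf_eq, Set.mem_preimage]
      have he0 : e 0 = i := Equiv.swap_apply_left 0 i
      have hcard : N 0 (v ∘ e) = N i v := by
        rw [hN]
        simp only [Function.comp_apply, he0]
        apply Finset.card_bij' (fun j _ => e j) (fun j _ => e.symm j)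
        · intro a ha
          simp only [Finset.mem_filter, Finset.mem_univ, true_and] at ha ⊢
          exact ha
        · intro a ha
          simp only [Finset.mem_filter, Finset.mem_univ, true_and] at ha ⊢
          simpa using ha
        · intro a _; simp
        · intro a _; simp
      rw [hcard]
    have hmp : MeasurePreserving (fun v : Fin (K+1) → β => v ∘ e)
        (Measure.pi fun _ => ν) (Measure.pi fun _ => ν) := by
      have h1 := measurePreserving_piCongrLeft (fun _ : Fin (K+1) => ν) e.symm
      have heq : ⇑(MeasurableEquiv.piCongrLeft (fun _ : Fin (K+1) => β) e.symm)
          = fun v : Fin (K+1) → β => v ∘ e := by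
        funext v
        funext j
        rw [MeasurableEquiv.coe_piCongrLeft]
        simp [Equiv.piCongrLeft_apply, eq_rec_constant]
      rw [heq] at h1
      exact h1
    calc Measure.pi (fun _ : Fin (K+1) => ν) (A i)
        = Measure.pi (fun _ => ν) ((fun v => v ∘ e) ⁻¹' A 0) := by rw [hAe]
      _ = (Measure.map (fun v => v ∘ e) (Measure.pi fun _ => ν)) (A 0) := by
          rw [Measure.map_apply hmp.measurable (hAmeas 0)]
      _ = Measure.pi (fun _ => ν) (A 0) := by rw [hmp.map_eq]
  -- each μ (Z ⁻¹' A i) equal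
  have hμA : ∀ i, μ (Z ⁻¹' A i) = μ (Z ⁻¹' A 0) := by
    intro i
    rw [← Measure.map_apply hZmeas (hAmeas i), ← Measure.map_apply hZmeas (hAmeas 0), hmap,
      hswap i]
  -- sum bound
  have hsum : ∑ i : Fin (K+1), μ (Z ⁻¹' A i) ≤ ((K + 1 - p : ℕ) : ℝ≥0∞) := by
    have hind : ∀ i : Fin (K+1), μ (Z ⁻¹' A i)
        = ∫⁻ ω, (Z ⁻¹' A i).indicator (fun _ => (1 : ℝ≥0∞)) ω ∂μ := by
      intro i
      exact (lintegral_indicator_one (hZmeas (hAmeas i))).symm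
    classical
    calc ∑ i : Fin (K+1), μ (Z ⁻¹' A i)
        = ∑ i : Fin (K+1), ∫⁻ ω, (Z ⁻¹' A i).indicator (fun _ => (1:ℝ≥0∞)) ω ∂μ :=
          Finset.sum_congr rfl fun i _ => hind i
      _ = ∫⁻ ω, ∑ i : Fin (K+1), (Z ⁻¹' A i).indicator (fun _ => (1:ℝ≥0∞)) ω ∂μ :=
          (lintegral_finset_sum _ fun i _ =>
            (measurable_const.indicator (hZmeas (hAmeas i)))).symm
      _ ≤ ∫⁻ _, ((K + 1 - p : ℕ) : ℝ≥0∞) ∂μ := by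
          apply lintegral_mono
          intro ω
          show ∑ i : Fin (K+1), (Z ⁻¹' A i).indicator (fun _ => (1:ℝ≥0∞)) ω
            ≤ ((K + 1 - p : ℕ) : ℝ≥0∞)
          have hiteq : ∀ i : Fin (K+1), (Z ⁻¹' A i).indicator (fun _ => (1:ℝ≥0∞)) ω
              = if p ≤ N i (Z ω) then 1 else 0 := by
            intro i
            rw [Set.indicator_apply]
            exact if_congr Iff.rfl rfl rfl
          rw [Finset.sum_congr rfl fun i _ => hiteq i, Finset.sum_boole]
          have hcr := count_rank (fun i : Fin (K+1) => g (Y i ω)) p hpK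
          have hcard : (Finset.univ.filter fun i : Fin (K+1) => p ≤ N i (Z ω)).card
              ≤ K + 1 - p := hcr
          exact_mod_cast Nat.cast_le.2 hcard
      _ = ((K + 1 - p : ℕ) : ℝ≥0∞) := by
          rw [lintegral_const, measure_univ, mul_one]
  have hfinal : ((K : ℝ≥0∞) + 1) * μ (Z ⁻¹' A 0) = ∑ i : Fin (K+1), μ (Z ⁻¹' A i) := by
    rw [Finset.sum_congr rfl fun i _ => hμA i, Finset.sum_const, Finset.card_univ]
    simp [mul_comm]
  have hset : {ω | p ≤ (Finset.univ.filter fun j : Fin (K+1) => g (Y j ω) < g (Y 0 ω)).card}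
      = Z ⁻¹' A 0 := rfl
  rw [hset, hfinal]
  exact hsum

/-- **Theorem 2 (open-loop control).** The open-loop plan `x τ = ξ τ (Y 0 0)` is computed
at time `0` from the observation `Y 0 0`. If, almost surely, the plan satisfies the
tightened constraints `c (x τ) (ŷ_{τ|0}) ≥ L * C τ` (with `C τ < ∞`) for all
`τ ∈ {1,...,T}`, where `C τ` is the conformal bound built from the validation
trajectories with `p = ⌈(K+1)(1-δ/T)⌉`, then
`P(c (x τ) (Y 0 τ) ≥ 0 for all τ ∈ {1,...,T}) ≥ 1 - δ`. -/
theorem open_loop_safety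
    {Ω : Type*} [MeasurableSpace Ω] (μ : Measure Ω) [IsProbabilityMeasure μ]
    (d n T K : ℕ) (hT : 1 ≤ T)
    (Y : Fin (K + 1) → Ω → (Fin (T + 1) → EuclideanSpace ℝ (Fin d)))
    (hmeas : ∀ i, Measurable (Y i))
    (hindep : iIndepFun Y μ)
    (hident : ∀ i, Measure.map (Y i) μ = Measure.map (Y 0) μ)
    (h : ℕ → EuclideanSpace ℝ (Fin d) → EuclideanSpace ℝ (Fin d))
    (hmeash : ∀ τ, Measurable (h τ))
    (δ : ℝ) (hδ : δ ∈ Set.Ioo (0 : ℝ) 1)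
    (p : ℕ) (hp : p = ⌈((K : ℝ) + 1) * (1 - δ / T)⌉₊)
    (C : ℕ → Ω → EReal)
    (hC : ∀ τ, 1 ≤ τ → ∀ (hτT : τ ≤ T) (ω : Ω), C τ ω =
      conformalBound K
        (fun i => ((‖Y i.succ ω ⟨τ, by omega⟩ - h τ (Y i.succ ω ⟨0, by omega⟩)‖ : ℝ) : EReal))
        p)
    (L : ℝ) (hL : 0 ≤ L)
    (c : EuclideanSpace ℝ (Fin n) → EuclideanSpace ℝ (Fin d) → ℝ)
    (hc : ∀ (x : EuclideanSpace ℝ (Fin n)) (y' y'' : EuclideanSpace ℝ (Fin d)),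
      (|c x y' - c x y''|) ≤ L * ‖y' - y''‖)
    (ξ : ℕ → EuclideanSpace ℝ (Fin d) → EuclideanSpace ℝ (Fin n))
    (hmeasξ : ∀ τ, Measurable (ξ τ))
    (hfeas : ∀ᵐ ω ∂μ, ∀ τ, 1 ≤ τ → ∀ hτT : τ ≤ T,
      C τ ω < ⊤ ∧
      (L : EReal) * C τ ω ≤
        ((c (ξ τ (Y 0 ω ⟨0, by omega⟩)) (h τ (Y 0 ω ⟨0, by omega⟩)) : ℝ) : EReal)) :
    ENNReal.ofReal (1 - δ) ≤
      μ {ω | ∀ τ, 1 ≤ τ → ∀ hτT : τ ≤ T,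
        0 ≤ c (ξ τ (Y 0 ω ⟨0, by omega⟩)) (Y 0 ω ⟨τ, by omega⟩)} := by
  obtain ⟨hδ0, hδ1⟩ := hδ
  have hT0 : (0 : ℝ) < T := by exact_mod_cast hT
  have hδT0 : 0 < δ / T := div_pos hδ0 hT0
  have hδT1 : δ / T < 1 := by
    rw [div_lt_one hT0]
    calc δ < 1 := hδ1
    _ ≤ (T : ℝ) := by exact_mod_cast hT
  have hp1 : 1 ≤ p := by
    have hpos : (0 : ℝ) < ((K : ℝ) + 1) * (1 - δ / T) := by
      apply mul_pos (by positivity)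
      linarith
    have := Nat.ceil_pos.2 hpos
    omega
  have hpK : p ≤ K + 1 := by
    rw [hp]
    apply Nat.ceil_le.2
    have hK0 : (0 : ℝ) ≤ (K : ℝ) := Nat.cast_nonneg K
    push_cast
    nlinarith
  -- the score functions
  set g : ℕ → (Fin (T + 1) → EuclideanSpace ℝ (Fin d)) → ℝ :=
    fun τ y => ‖y ⟨min τ T, by omega⟩ - h τ (y ⟨0, by omega⟩)‖ with hgdef
  have hgmeas : ∀ τ, Measurable (g τ) := by
    intro τ
    simp only [hgdef]
    apply Measurable.norm
    exact (measurable_pi_apply _).sub ((hmeash τ).comp (measurable_pi_apply _))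
  have hgτ : ∀ τ, 1 ≤ τ → ∀ (hτT : τ ≤ T) y, g τ y =
      ‖y ⟨τ, by omega⟩ - h τ (y ⟨0, by omega⟩)‖ := by
    intro τ hτ1 hτT y
    have hmk : (⟨min τ T, by omega⟩ : Fin (T + 1)) = ⟨τ, by omega⟩ :=
      Fin.ext (by simp [min_eq_left hτT])
    simp only [hgdef]
    rw [hmk]
  -- the per-time "coverage" events
  set E : ℕ → Set Ω := fun τ =>
    {ω | (Finset.univ.filter fun j : Fin (K+1) => g τ (Y j ω) < g τ (Y 0 ω)).card < p}
    with hEdef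
  have hEmeas : ∀ τ, MeasurableSet (E τ) := by
    intro τ
    have hm : Measurable (fun ω =>
        (Finset.univ.filter fun j : Fin (K+1) => g τ (Y j ω) < g τ (Y 0 ω)).card) := by
      have hfn : (fun ω =>
          (Finset.univ.filter fun j : Fin (K+1) => g τ (Y j ω) < g τ (Y 0 ω)).card)
          = fun ω => ∑ j : Fin (K+1), if g τ (Y j ω) < g τ (Y 0 ω) then 1 else 0 := by
        funext ω; exact Finset.card_filter _ _
      rw [hfn]
      refine Finset.measurable_sum _ fun j _ =>
        Measurable.ite ?_ measurable_const measurable_const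
      exact measurableSet_lt ((hgmeas τ).comp (hmeas j)) ((hgmeas τ).comp (hmeas 0))
    exact hm measurableSet_Iio
  have hEcompl : ∀ τ, (E τ)ᶜ =
      {ω | p ≤ (Finset.univ.filter fun j : Fin (K+1) => g τ (Y j ω) < g τ (Y 0 ω)).card} := by
    intro τ
    ext ω
    simp [hEdef, not_lt]
  -- per-time probability bound
  have hbound : ∀ τ, μ ((E τ)ᶜ) ≤ ENNReal.ofReal (δ / T) := by
    intro τ
    have hrb := rank_bound μ Y hmeas hindep hident (g τ) (hgmeas τ) p hpK
    rw [hEcompl τ]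
    have hKne : ((K : ℝ≥0∞) + 1) ≠ 0 := by simp
    have hKtop : ((K : ℝ≥0∞) + 1) ≠ ⊤ := by simp [ENNReal.add_eq_top]
    have h1 : μ {ω | p ≤ (Finset.univ.filter
          fun j : Fin (K+1) => g τ (Y j ω) < g τ (Y 0 ω)).card} * ((K : ℝ≥0∞) + 1)
        ≤ ENNReal.ofReal (δ / T) * ((K : ℝ≥0∞) + 1) := by
      rw [mul_comm]
      refine le_trans hrb ?_
      have hceil : ((K : ℝ) + 1) * (1 - δ / T) ≤ p := by rw [hp]; exact Nat.le_ceil _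
      have hreal : ((K + 1 - p : ℕ) : ℝ) ≤ (δ / T) * ((K : ℝ) + 1) := by
        have hcast : ((K + 1 - p : ℕ) : ℝ) = ((K : ℝ) + 1) - p := by
          rw [Nat.cast_sub hpK]; push_cast; ring
        rw [hcast]
        nlinarith
      calc ((K + 1 - p : ℕ) : ℝ≥0∞) = ENNReal.ofReal ((K + 1 - p : ℕ) : ℝ) := by
            rw [ENNReal.ofReal_natCast]
        _ ≤ ENNReal.ofReal ((δ / T) * ((K : ℝ) + 1)) := ENNReal.ofReal_le_ofReal hreal
        _ = ENNReal.ofReal (δ / T) * ENNReal.ofReal ((K : ℝ) + 1) :=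
            ENNReal.ofReal_mul (le_of_lt hδT0)
        _ = ENNReal.ofReal (δ / T) * ((K : ℝ≥0∞) + 1) := by
            congr 1
            rw [ENNReal.ofReal_add (Nat.cast_nonneg K) zero_le_one]
            simp [ENNReal.ofReal_natCast]
    exact (ENNReal.mul_le_mul_iff_left hKne hKtop).1 h1
  -- characterization of E via the conformal bound
  have hE_iff : ∀ τ, 1 ≤ τ → ∀ (hτT : τ ≤ T) (ω : Ω),
      ω ∈ E τ ↔ ((g τ (Y 0 ω) : ℝ) : EReal) ≤ C τ ω := by
    intro τ hτ1 hτT ω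
    rw [hC τ hτ1 hτT ω]
    have hcb : conformalBound K
        (fun i => ((‖Y i.succ ω ⟨τ, by omega⟩ - h τ (Y i.succ ω ⟨0, by omega⟩)‖ : ℝ) : EReal)) p
        = conformalBound K (fun i : Fin K => ((g τ (Y i.succ ω) : ℝ) : EReal)) p := by
      congr 1
      funext i
      rw [hgτ τ hτ1 hτT]
    rw [hcb]
    rw [le_conformalBound_iff hp1 hpK (fun i : Fin K => g τ (Y i.succ ω)) (g τ (Y 0 ω))]
    have hcard : (Finset.univ.filter fun j : Fin (K+1) => g τ (Y j ω) < g τ (Y 0 ω)).card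
        = (Finset.univ.filter fun j : Fin K => g τ (Y j.succ ω) < g τ (Y 0 ω)).card := by
      rw [Finset.card_filter, Finset.card_filter, Fin.sum_univ_succ]
      simp
    constructor
    · intro hω
      rw [hEdef] at hω
      simp only [Set.mem_setOf_eq] at hω
      omega
    · intro hcnt
      rw [hEdef]
      simp only [Set.mem_setOf_eq]
      omega
  -- the null set from feasibility
  obtain ⟨t, hts, htm, ht0⟩ :=
    exists_measurable_superset_of_null (ae_iff.1 hfeas)
  set G : Set Ω := (⋂ τ ∈ Finset.Icc 1 T, E τ) \ t with hGdef
  have hGsub : G ⊆ {ω | ∀ τ, 1 ≤ τ → ∀ hτT : τ ≤ T,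
      0 ≤ c (ξ τ (Y 0 ω ⟨0, by omega⟩)) (Y 0 ω ⟨τ, by omega⟩)} := by
    intro ω hω
    obtain ⟨hωE, hωt⟩ := hω
    have hP : ∀ τ, 1 ≤ τ → ∀ hτT : τ ≤ T,
        C τ ω < ⊤ ∧
        (L : EReal) * C τ ω ≤
          ((c (ξ τ (Y 0 ω ⟨0, by omega⟩)) (h τ (Y 0 ω ⟨0, by omega⟩)) : ℝ) : EReal) := by
      by_contra hcon
      exact hωt (hts hcon)
    intro τ hτ1 hτT
    obtain ⟨hClt, hCfeas⟩ := hP τ hτ1 hτT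
    have hωE' : ω ∈ E τ :=
      Set.mem_iInter₂.1 hωE τ (Finset.mem_Icc.2 ⟨hτ1, hτT⟩)
    have hle : ((g τ (Y 0 ω) : ℝ) : EReal) ≤ C τ ω := (hE_iff τ hτ1 hτT ω).1 hωE'
    have hCbot : C τ ω ≠ ⊥ := by
      intro hb
      rw [hb, le_bot_iff] at hle
      exact EReal.coe_ne_bot _ hle
    set c0 := (C τ ω).toReal with hc0
    have hCeq : C τ ω = (c0 : EReal) := (EReal.coe_toReal (ne_of_lt hClt) hCbot).symm
    rw [hCeq] at hle hCfeas
    have hx : g τ (Y 0 ω) ≤ c0 := by exact_mod_cast hle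
    rw [← EReal.coe_mul] at hCfeas
    have hfeasR : L * c0 ≤ c (ξ τ (Y 0 ω ⟨0, by omega⟩)) (h τ (Y 0 ω ⟨0, by omega⟩)) := by
      exact_mod_cast hCfeas
    have habs := hc (ξ τ (Y 0 ω ⟨0, by omega⟩)) (Y 0 ω ⟨τ, by omega⟩)
      (h τ (Y 0 ω ⟨0, by omega⟩))
    have hnorm : ‖Y 0 ω ⟨τ, by omega⟩ - h τ (Y 0 ω ⟨0, by omega⟩)‖ = g τ (Y 0 ω) :=
      (hgτ τ hτ1 hτT (Y 0 ω)).symm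
    rw [hnorm] at habs
    obtain ⟨habs1, habs2⟩ := abs_le.1 habs
    have hnn : 0 ≤ L * (c0 - g τ (Y 0 ω)) := mul_nonneg hL (by linarith)
    nlinarith
  -- measure computation
  have hImeas : MeasurableSet (⋂ τ ∈ Finset.Icc 1 T, E τ) :=
    MeasurableSet.biInter ((Finset.Icc 1 T : Finset ℕ) : Set ℕ).to_countable
      fun τ _ => hEmeas τ
  have hUmeas : MeasurableSet (⋃ τ ∈ Finset.Icc 1 T, (E τ)ᶜ) :=
    MeasurableSet.biUnion ((Finset.Icc 1 T : Finset ℕ) : Set ℕ).to_countable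
      fun τ _ => (hEmeas τ).compl
  have hUnion : μ (⋃ τ ∈ Finset.Icc 1 T, (E τ)ᶜ) ≤ ENNReal.ofReal δ := by
    calc μ (⋃ τ ∈ Finset.Icc 1 T, (E τ)ᶜ) ≤ ∑ τ ∈ Finset.Icc 1 T, μ ((E τ)ᶜ) :=
          measure_biUnion_finset_le _ _
      _ ≤ ∑ τ ∈ Finset.Icc 1 T, ENNReal.ofReal (δ / T) :=
          Finset.sum_le_sum fun τ _ => hbound τ
      _ = (T : ℝ≥0∞) * ENNReal.ofReal (δ / T) := by
          rw [Finset.sum_const, Nat.card_Icc]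
          simp [nsmul_eq_mul]
      _ = ENNReal.ofReal δ := by
          rw [← ENNReal.ofReal_natCast T, ← ENNReal.ofReal_mul (Nat.cast_nonneg T)]
          congr 1
          field_simp
  have hIcompl : (⋂ τ ∈ Finset.Icc 1 T, E τ) = (⋃ τ ∈ Finset.Icc 1 T, (E τ)ᶜ)ᶜ := by
    simp
  have hμI : ENNReal.ofReal (1 - δ) ≤ μ (⋂ τ ∈ Finset.Icc 1 T, E τ) := by
    rw [hIcompl, prob_compl_eq_one_sub hUmeas]
    have hof : ENNReal.ofReal (1 - δ) = 1 - ENNReal.ofReal δ := by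
      rw [ENNReal.ofReal_sub _ (le_of_lt hδ0), ENNReal.ofReal_one]
    rw [hof]
    exact tsub_le_tsub_left hUnion 1
  have hμG : μ G = μ (⋂ τ ∈ Finset.Icc 1 T, E τ) := measure_diff_null ht0
  calc ENNReal.ofReal (1 - δ) ≤ μ (⋂ τ ∈ Finset.Icc 1 T, E τ) := hμI
    _ = μ G := hμG.symm
    _ ≤ μ {ω | ∀ τ, 1 ≤ τ → ∀ hτT : τ ≤ T,
        0 ≤ c (ξ τ (Y 0 ω ⟨0, by omega⟩)) (Y 0 ω ⟨τ, by omega⟩)} := measure_mono hGsub
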